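/- Convergence of the regularization as δ → 0: let T > 0, k > 0, k_d > 0, let w₀ ≥ 0, and let r : [0,T] → ℝ be continuous with 0 ≤ r(t) ≤ k/4 for all t. For each δ > 0 let w_δ : [0,T] → ℝ be the unique continuously differentiable solution of w_δ(0) = w₀, w_δ'(t) = k_d·(r(t) − ψ_δ(w_δ(t))). Then there exist a Lipschitz function w : [0,T] → ℝ and a measurable function z : [0,T] → ℝ with w(0) = w₀, z(t) ∈ ψ(w(t)) and w'(t) = k_d·(r(t) − z(t)) for almost every t ∈ (0,T), such that w_δ converges to w uniformly on [0,T] as δ → 0⁺ (i.e. sup_{t∈[0,T]} |w_δ(t) − w(t)| → 0). -/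

import Mathlib

open MeasureTheory

/-- For `δ > 0`, the regularized dissolution rate `ψ_δ : ℝ → ℝ`:
`ψ_δ(w) = 0` for `w ≤ 0`, `ψ_δ(w) = w/δ` for `0 < w < δ`, and `ψ_δ(w) = 1` for `w ≥ δ`. -/
noncomputable def psiDelta (δ : ℝ) (w : ℝ) : ℝ :=
  if w ≤ 0 then 0 else if w < δ then w / δ else 1

/-- The multivalued Heaviside dissolution graph: `z ∈ ψ(w)` iff `0 ≤ z ≤ 1`,
`z = 0` whenever `w < 0`, and `z = 1` whenever `w > 0`. -/
def psiGraph (w : ℝ) : Set ℝ :=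
  {z : ℝ | 0 ≤ z ∧ z ≤ 1 ∧ (w < 0 → z = 0) ∧ (0 < w → z = 1)}

/-!
Where `w_δ - w_δ'` exceeds `max δ δ'`, the solution `w_δ` lies above `δ` and dissolves at the
maximal rate, so `|w_δ - w_δ'| ≤ max δ δ'`: the `w_δ` converge uniformly, to a limit `w` that
keeps their common Lipschitz bound. Near a point where `w > 0`, every `w_δ` with `δ` small solves
`w' = k_d (r - 1)`, hence so does `w`. At a zero of `w`, `w` is minimal, so `w' = 0`, while the
lower bound `w_δ' ≥ k_d (r - 1)` passes to the limit and gives `r ≤ 1`. So `z = 1` on `{w > 0}`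
and `z = r` on `{w = 0}` is a selection of `ψ(w)`.
-/

open Set Filter Topology

lemma psiDelta_nonneg (δ w : ℝ) : 0 ≤ psiDelta δ w := by
  unfold psiDelta
  split_ifs with h₀ h₁
  · exact le_rfl
  · exact div_nonneg (not_le.1 h₀).le ((not_le.1 h₀).trans h₁).le
  · exact zero_le_one

lemma psiDelta_le_one (δ w : ℝ) : psiDelta δ w ≤ 1 := by
  unfold psiDelta
  split_ifs with h₀ h₁
  · exact zero_le_one
  · exact (div_lt_one ((not_le.1 h₀).trans h₁)).2 h₁ |>.le
  · exact le_rfl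

lemma psiDelta_of_nonpos {δ w : ℝ} (hw : w ≤ 0) : psiDelta δ w = 0 := if_pos hw

lemma psiDelta_of_le {δ w : ℝ} (hδ : 0 < δ) (hw : δ ≤ w) : psiDelta δ w = 1 := by
  unfold psiDelta
  rw [if_neg (by linarith), if_neg (not_lt.2 hw)]

lemma HasDerivWithinAt.Ici_of_Icc {f : ℝ → ℝ} {f' a b x : ℝ}
    (h : HasDerivWithinAt f f' (Icc a b) x) (hx : x ∈ Ico a b) :
    HasDerivWithinAt f f' (Ici x) x :=
  h.mono_of_mem_nhdsWithin <|
    mem_of_superset (Icc_mem_nhdsGE hx.2) (Icc_subset_Icc_left hx.1)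

/-- Apply the strict fencing theorem `image_le_of_deriv_right_lt_deriv_boundary'` to the barriers
`c + ε (1 + x - a)` and let `ε → 0`. -/
lemma image_le_of_deriv_right_nonpos_of_gt {f f' : ℝ → ℝ} {a b c : ℝ}
    (hf : ContinuousOn f (Icc a b)) (hf' : ∀ x ∈ Ico a b, HasDerivWithinAt f (f' x) (Ici x) x)
    (ha : f a ≤ c) (bound : ∀ x ∈ Ico a b, c < f x → f' x ≤ 0) :
    ∀ x ∈ Icc a b, f x ≤ c := by
  intro x hx
  have hx₀ : 0 < 1 + (x - a) := by linarith [hx.1]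
  have barrier : ∀ ε > 0, f x ≤ c + ε * (1 + (x - a)) := by
    intro ε hε
    refine image_le_of_deriv_right_lt_deriv_boundary' (B := fun y => c + ε * (1 + (y - a)))
      (B' := fun _ => ε) hf hf' (by simpa using (ha.trans_lt (lt_add_of_pos_right c hε)).le)
      (by fun_prop) (fun y _ => ?_) (fun y hy hfy => (bound y hy ?_).trans_lt hε) hx
    · simpa using (((hasDerivWithinAt_id y _).sub_const a).const_add 1).const_mul ε |>.const_add c
    · rw [hfy]
      have : 0 < 1 + (y - a) := by linarith [hy.1]
      simp only [lt_add_iff_pos_right]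
      positivity
  refine le_of_forall_pos_le_add fun ε hε => ?_
  simpa [div_mul_cancel₀ _ hx₀.ne'] using barrier (ε / (1 + (x - a))) (by positivity)

lemma uniformCauchySeqOn_of_dist_le_max {X E : Type*} [PseudoMetricSpace E] {F : ℝ → X → E}
    {s : Set X} (h : ∀ δ > 0, ∀ δ' > 0, ∀ x ∈ s, dist (F δ x) (F δ' x) ≤ max δ δ') :
    UniformCauchySeqOn F (𝓝[>] 0) s := by
  intro u hu
  obtain ⟨ε, hε, hεu⟩ := Metric.mem_uniformity_dist.1 hu
  filter_upwards [prod_mem_prod (Ioo_mem_nhdsGT hε) (Ioo_mem_nhdsGT hε)]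
    with ⟨δ, δ'⟩ ⟨hδ, hδ'⟩ x hx
  exact hεu ((h δ hδ.1 δ' hδ'.1 x hx).trans_lt (max_lt hδ.2 hδ'.2))

lemma UniformCauchySeqOn.tendstoUniformlyOn_limUnder {ι X E : Type*} [UniformSpace E]
    [CompleteSpace E] [Nonempty E] {F : ι → X → E} {p : Filter ι} [NeBot p] {s : Set X}
    (hF : UniformCauchySeqOn F p s) :
    TendstoUniformlyOn F (fun x => limUnder p (F · x)) p s :=
  hF.tendstoUniformlyOn_of_tendsto fun _ hx =>
    tendsto_nhds_limUnder (CompleteSpace.complete (hF.cauchy_map hx))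

lemma LipschitzOnWith.of_tendsto {ι X E : Type*} [PseudoMetricSpace X] [PseudoMetricSpace E]
    {F : ι → X → E} {f : X → E} {p : Filter ι} [NeBot p] {s : Set X} {K : NNReal}
    (hF : ∀ᶠ i in p, LipschitzOnWith K (F i) s)
    (hf : ∀ x ∈ s, Tendsto (F · x) p (𝓝 (f x))) : LipschitzOnWith K f s :=
  LipschitzOnWith.of_dist_le_mul fun x hx y hy =>
    le_of_tendsto ((hf x hx).dist (hf y hy)) (hF.mono fun _ hi => hi.dist_le_mul x hx y hy)

lemma MonotoneOn.of_tendsto {ι α β : Type*} [Preorder α] [TopologicalSpace β] [Preorder β]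
    [OrderClosedTopology β] {F : ι → α → β} {f : α → β} {p : Filter ι} [NeBot p] {s : Set α}
    (hF : ∀ᶠ i in p, MonotoneOn (F i) s) (hf : ∀ x ∈ s, Tendsto (F · x) p (𝓝 (f x))) :
    MonotoneOn f s := fun x hx y hy hxy =>
  le_of_tendsto_of_tendsto (hf x hx) (hf y hy) (hF.mono fun _ hi => hi hx hy hxy)

structure IsRegularizedSolution (kd T w₀ δ : ℝ) (r f : ℝ → ℝ) : Prop where
  apply_zero : f 0 = w₀
  hasDerivWithinAt : ∀ t ∈ Icc 0 T,
    HasDerivWithinAt f (kd * (r t - psiDelta δ (f t))) (Icc 0 T) t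

namespace IsRegularizedSolution

variable {kd T w₀ δ : ℝ} {r f : ℝ → ℝ}

lemma continuousOn (h : IsRegularizedSolution kd T w₀ δ r f) : ContinuousOn f (Icc 0 T) :=
  HasDerivWithinAt.continuousOn h.hasDerivWithinAt

lemma hasDerivAt (h : IsRegularizedSolution kd T w₀ δ r f) {t : ℝ} (ht : t ∈ Ioo 0 T) :
    HasDerivAt f (kd * (r t - psiDelta δ (f t))) t :=
  (h.hasDerivWithinAt t (Ioo_subset_Icc_self ht)).hasDerivAt (Icc_mem_nhds ht.1 ht.2)

lemma hasDerivWithinAt_Ici (h : IsRegularizedSolution kd T w₀ δ r f) {t : ℝ}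
    (ht : t ∈ Ico 0 T) : HasDerivWithinAt f (kd * (r t - psiDelta δ (f t))) (Ici t) t :=
  (h.hasDerivWithinAt t (Ico_subset_Icc_self ht)).Ici_of_Icc ht

lemma nonneg (h : IsRegularizedSolution kd T w₀ δ r f) (hkd : 0 ≤ kd)
    (hr : ∀ t ∈ Icc 0 T, 0 ≤ r t) (hw₀ : 0 ≤ w₀) : ∀ t ∈ Icc 0 T, 0 ≤ f t := by
  have hle := image_le_of_deriv_right_nonpos_of_gt (c := 0) h.continuousOn.neg
    (fun t ht => (h.hasDerivWithinAt_Ici ht).neg) (by simpa [h.apply_zero] using hw₀)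
    fun t ht hft => by
      rw [psiDelta_of_nonpos (neg_pos.1 hft).le, sub_zero, neg_nonpos]
      exact mul_nonneg hkd (hr t (Ico_subset_Icc_self ht))
  exact fun t ht => neg_nonpos.1 (hle t ht)

lemma sub_le_max {δ' : ℝ} {g : ℝ → ℝ} (hf : IsRegularizedSolution kd T w₀ δ r f)
    (hg : IsRegularizedSolution kd T w₀ δ' r g) (hδ : 0 < δ) (hkd : 0 ≤ kd)
    (hg₀ : ∀ t ∈ Icc 0 T, 0 ≤ g t) : ∀ t ∈ Icc 0 T, f t - g t ≤ max δ δ' :=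
  image_le_of_deriv_right_nonpos_of_gt (hf.continuousOn.sub hg.continuousOn)
    (fun t ht => (hf.hasDerivWithinAt_Ici ht).sub (hg.hasDerivWithinAt_Ici ht))
    (by simpa [hf.apply_zero, hg.apply_zero] using Or.inl hδ.le)
    fun t ht hgt => by
      have hδf : δ ≤ f t := by
        linarith [le_max_left δ δ', hg₀ t (Ico_subset_Icc_self ht)]
      rw [psiDelta_of_le hδ hδf]
      nlinarith [psiDelta_le_one δ' (g t)]

lemma abs_sub_le_max {δ' : ℝ} {g : ℝ → ℝ} (hf : IsRegularizedSolution kd T w₀ δ r f)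
    (hg : IsRegularizedSolution kd T w₀ δ' r g) (hδ : 0 < δ) (hδ' : 0 < δ') (hkd : 0 ≤ kd)
    (hf₀ : ∀ t ∈ Icc 0 T, 0 ≤ f t) (hg₀ : ∀ t ∈ Icc 0 T, 0 ≤ g t) :
    ∀ t ∈ Icc 0 T, |f t - g t| ≤ max δ δ' := fun t ht =>
  abs_sub_le_iff.2 ⟨hf.sub_le_max hg hδ hkd hg₀ t ht,
    max_comm δ δ' ▸ hg.sub_le_max hf hδ' hkd hf₀ t ht⟩

lemma lipschitzOnWith (h : IsRegularizedSolution kd T w₀ δ r f) {M : ℝ}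
    (hr : ∀ t ∈ Icc 0 T, |r t| ≤ M) :
    LipschitzOnWith (|kd| * (M + 1)).toNNReal f (Icc 0 T) := by
  refine (convex_Icc 0 T).lipschitzOnWith_of_nnnorm_hasDerivWithin_le h.hasDerivWithinAt
    fun t ht => ?_
  rw [← NNReal.coe_le_coe, coe_nnnorm, Real.norm_eq_abs, abs_mul]
  refine le_trans ?_ (Real.le_coe_toNNReal _)
  gcongr
  calc |r t - psiDelta δ (f t)| ≤ |r t| + |psiDelta δ (f t)| := abs_sub _ _
    _ ≤ M + 1 := by
      rw [abs_of_nonneg (psiDelta_nonneg δ (f t))]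
      exact add_le_add (hr t ht) (psiDelta_le_one δ (f t))

end IsRegularizedSolution

section RegularizationLimit

variable {kd T w₀ : ℝ} {r : ℝ → ℝ} {W : ℝ → ℝ → ℝ} {w : ℝ → ℝ} {t : ℝ}

lemma hasDerivAt_regularized_limit_of_pos
    (hW : ∀ δ > 0, IsRegularizedSolution kd T w₀ δ r (W δ))
    (hlim : TendstoUniformlyOn W w (𝓝[>] 0) (Icc 0 T)) (ht : t ∈ Ioo 0 T) (hwt : 0 < w t)
    (hwc : ContinuousAt w t) : HasDerivAt w (kd * (r t - 1)) t := by
  have hsat :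
      ∀ᶠ p : ℝ × ℝ in 𝓝[>] 0 ×ˢ 𝓝 t, 0 < p.1 ∧ p.2 ∈ Ioo 0 T ∧ p.1 ≤ W p.1 p.2 := by
    have hδ : ∀ᶠ δ in 𝓝[>] (0 : ℝ),
        δ ∈ Ioo 0 (w t / 4) ∧ ∀ s ∈ Icc 0 T, dist (w s) (W δ s) < w t / 4 :=
      (eventually_mem_set.2 (Ioo_mem_nhdsGT (by positivity))).and
        (Metric.tendstoUniformlyOn_iff.1 hlim _ (by positivity))
    have hs : ∀ᶠ s in 𝓝 t, s ∈ Ioo 0 T ∧ w t / 2 < w s :=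
      (eventually_mem_set.2 (Ioo_mem_nhds ht.1 ht.2)).and
        (hwc.eventually (lt_mem_nhds (by linarith)))
    filter_upwards [hδ.prod_mk hs] with ⟨δ, s⟩ ⟨⟨hδ, hclose⟩, hs, hws⟩
    have hdist := hclose s (Ioo_subset_Icc_self hs)
    rw [Real.dist_eq, abs_lt] at hdist
    exact ⟨hδ.1, hs, by linarith [hδ.2]⟩
  refine hasDerivAt_of_tendstoUniformlyOnFilter (l := 𝓝[>] 0) (f := W)
    (f' := fun δ s => kd * (r s - psiDelta δ (W δ s))) (g' := fun s => kd * (r s - 1)) ?_ ?_ ?_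
  · refine TendstoUniformlyOnFilter.congr (F := fun _ s => kd * (r s - 1))
      (fun u hu => Eventually.of_forall fun _ => refl_mem_uniformity hu) ?_
    filter_upwards [hsat] with ⟨δ, s⟩ ⟨hδ, _, hle⟩
    rw [psiDelta_of_le hδ hle]
  · filter_upwards [hsat] with ⟨δ, s⟩ ⟨hδ, hs, _⟩ using (hW δ hδ).hasDerivAt hs
  · filter_upwards [Ioo_mem_nhds ht.1 ht.2] with s hs
    exact hlim.tendsto_at (Ioo_subset_Icc_self hs)

/-- To the right of `t`, `W δ - c s` is monotone for every `c < k_d (r t - 1)`, and monotonicity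
survives the limit. -/
lemma mul_sub_one_le_of_hasDerivAt_regularized_limit
    (hW : ∀ δ > 0, IsRegularizedSolution kd T w₀ δ r (W δ))
    (hlim : ∀ s ∈ Icc 0 T, Tendsto (W · s) (𝓝[>] 0) (𝓝 (w s))) (hkd : 0 ≤ kd)
    (hr : ContinuousOn r (Icc 0 T)) (ht : t ∈ Ioo 0 T) {w' : ℝ} (hw : HasDerivAt w w' t) :
    kd * (r t - 1) ≤ w' := by
  refine le_of_forall_lt_imp_le_of_dense fun c hc => ?_
  have hrt : ContinuousAt (fun s => kd * (r s - 1)) t :=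
    (((hr t (Ioo_subset_Icc_self ht)).continuousAt (Icc_mem_nhds ht.1 ht.2)).sub
      continuousAt_const).const_mul kd
  have hnear : ∀ᶠ s in 𝓝[≥] t, s ∈ Ioo 0 T ∧ c < kd * (r s - 1) :=
    nhdsWithin_le_nhds <|
      (eventually_mem_set.2 (Ioo_mem_nhds ht.1 ht.2)).and (hrt.eventually (lt_mem_nhds hc))
  obtain ⟨u, htu, hsub⟩ := mem_nhdsGE_iff_exists_Icc_subset.1 hnear
  have hmono : MonotoneOn (fun s => w s - c * s) (Icc t u) := by
    refine MonotoneOn.of_tendsto (F := fun δ s => W δ s - c * s) ?_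
      fun s hs => (hlim s (Ioo_subset_Icc_self (hsub hs).1)).sub_const (c * s)
    filter_upwards [self_mem_nhdsWithin] with δ hδ
    refine monotoneOn_of_hasDerivWithinAt_nonneg (convex_Icc t u)
      (((hW δ hδ).continuousOn.mono fun s hs => Ioo_subset_Icc_self (hsub hs).1).sub
        (continuousOn_const.mul continuousOn_id))
      (fun s hs => (((hW δ hδ).hasDerivAt (hsub (interior_subset hs)).1).sub
        ((hasDerivAt_id s).const_mul c)).hasDerivWithinAt) fun s hs => ?_
    have hcs := (hsub (interior_subset hs)).2
    nlinarith [psiDelta_le_one δ (W δ s)]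
  have hacc : AccPt t (𝓟 (Icc t u)) := by
    rw [accPt_principal_iff_nhdsWithin, Icc_sdiff_left]
    exact left_nhdsWithin_Ioc_neBot htu
  have := (hw.sub ((hasDerivAt_id t).const_mul c)).hasDerivWithinAt.nonneg_of_monotoneOn hacc hmono
  linarith

lemma mem_psiGraph_and_hasDerivAt_regularized_limit
    (hW : ∀ δ > 0, IsRegularizedSolution kd T w₀ δ r (W δ))
    (hlim : TendstoUniformlyOn W w (𝓝[>] 0) (Icc 0 T)) (hkd : 0 < kd)
    (hr : ContinuousOn r (Icc 0 T)) (hr₀ : ∀ s ∈ Icc 0 T, 0 ≤ r s)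
    (hw₀ : ∀ s ∈ Icc 0 T, 0 ≤ w s) (ht : t ∈ Ioo 0 T) (hdiff : DifferentiableAt ℝ w t) :
    (if 0 < w t then 1 else r t) ∈ psiGraph (w t) ∧
      HasDerivAt w (kd * (r t - if 0 < w t then 1 else r t)) t := by
  split_ifs with hpos
  · exact ⟨⟨zero_le_one, le_rfl, fun h => absurd h hpos.not_gt, fun _ => rfl⟩,
      hasDerivAt_regularized_limit_of_pos hW hlim ht hpos hdiff.continuousAt⟩
  have hzero : w t = 0 := le_antisymm (not_lt.1 hpos) (hw₀ t (Ioo_subset_Icc_self ht))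
  have hmin : IsLocalMin w t := by
    filter_upwards [Icc_mem_nhds ht.1 ht.2] with s hs
    exact hzero ▸ hw₀ s hs
  have hderiv : HasDerivAt w 0 t :=
    hmin.hasDerivAt_eq_zero hdiff.hasDerivAt ▸ hdiff.hasDerivAt
  have hr1 : r t ≤ 1 := by
    have := mul_sub_one_le_of_hasDerivAt_regularized_limit hW (fun s hs => hlim.tendsto_at hs)
      hkd.le hr ht hderiv
    nlinarith
  refine ⟨⟨hr₀ t (Ioo_subset_Icc_self ht), hr1, fun h => absurd hzero h.ne,
    fun h => absurd hzero h.ne'⟩, ?_⟩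
  rwa [sub_self, mul_zero]

end RegularizationLimit

theorem regularization_convergence_general (T k kd w₀ : ℝ) (hT : 0 < T) (hkd : 0 < kd)
    (hw₀ : 0 ≤ w₀) (r : ℝ → ℝ) (hr : ContinuousOn r (Set.Icc 0 T))
    (hrb : ∀ t ∈ Set.Icc (0 : ℝ) T, 0 ≤ r t ∧ r t ≤ k / 4)
    (W : ℝ → ℝ → ℝ)
    (hW0 : ∀ δ > (0 : ℝ), W δ 0 = w₀)
    (hWderiv : ∀ δ > (0 : ℝ), ∀ t ∈ Set.Icc (0 : ℝ) T,
      HasDerivWithinAt (W δ) (kd * (r t - psiDelta δ (W δ t))) (Set.Icc 0 T) t) :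
    ∃ w z : ℝ → ℝ,
      (∃ L : NNReal, LipschitzOnWith L w (Set.Icc 0 T)) ∧
      Measurable z ∧
      w 0 = w₀ ∧
      (∀ᵐ t ∂(volume.restrict (Set.Ioo (0 : ℝ) T)),
        z t ∈ psiGraph (w t) ∧ HasDerivAt w (kd * (r t - z t)) t) ∧
      TendstoUniformlyOn W w (nhdsWithin 0 (Set.Ioi 0)) (Set.Icc 0 T) := by
  have hW : ∀ δ > 0, IsRegularizedSolution kd T w₀ δ r (W δ) := fun δ hδ =>
    ⟨hW0 δ hδ, hWderiv δ hδ⟩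
  have hr_nonneg : ∀ t ∈ Icc 0 T, 0 ≤ r t := fun t ht => (hrb t ht).1
  have hW_nonneg : ∀ δ > 0, ∀ t ∈ Icc 0 T, 0 ≤ W δ t := fun δ hδ =>
    (hW δ hδ).nonneg hkd.le hr_nonneg hw₀
  have hcauchy : UniformCauchySeqOn W (𝓝[>] 0) (Icc 0 T) :=
    uniformCauchySeqOn_of_dist_le_max fun δ hδ δ' hδ' t ht => by
      rw [Real.dist_eq]
      exact (hW δ hδ).abs_sub_le_max (hW δ' hδ') hδ hδ' hkd.le (hW_nonneg δ hδ)
        (hW_nonneg δ' hδ') t ht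
  have hlip := LipschitzOnWith.of_tendsto (p := 𝓝[>] 0)
    (eventually_nhdsWithin_of_forall fun δ hδ => (hW δ hδ).lipschitzOnWith (M := k / 4)
      fun t ht => abs_le.2 ⟨by linarith [hrb t ht], (hrb t ht).2⟩)
    fun _ ht => hcauchy.tendstoUniformlyOn_limUnder.tendsto_at ht
  obtain ⟨w, hwlip, hw_eq⟩ := hlip.extend_real
  have hlim : TendstoUniformlyOn W w (𝓝[>] 0) (Icc 0 T) :=
    hcauchy.tendstoUniformlyOn_limUnder.congr_right hw_eq
  have hw_nonneg : ∀ t ∈ Icc 0 T, 0 ≤ w t := fun t ht =>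
    ge_of_tendsto (hlim.tendsto_at ht) <|
      eventually_nhdsWithin_of_forall fun δ hδ => hW_nonneg δ hδ t ht
  -- `r` is only continuous on `[0, T]`; extending it by `IccExtend` makes `z` measurable.
  refine ⟨w, fun t => if 0 < w t then 1 else IccExtend hT.le (fun s : Icc 0 T => r s) t,
    ⟨_, hwlip.lipschitzOnWith⟩, ?_, ?_, ?_, hlim⟩
  · exact Measurable.ite (measurableSet_lt measurable_const hwlip.continuous.measurable)
      measurable_const
      (hr.comp_continuous continuous_subtype_val Subtype.prop).Icc_extend'.measurable
  · exact tendsto_nhds_unique (hlim.tendsto_at ⟨le_rfl, hT.le⟩)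
      (tendsto_const_nhds.congr' (eventually_nhdsWithin_of_forall fun δ hδ => (hW0 δ hδ).symm))
  · filter_upwards [ae_restrict_of_ae hwlip.ae_differentiableAt, ae_restrict_mem measurableSet_Ioo]
      with t hdiff ht
    rw [IccExtend_of_mem _ _ (Ioo_subset_Icc_self ht)]
    exact mem_psiGraph_and_hasDerivAt_regularized_limit hW hlim hkd hr hr_nonneg hw_nonneg ht hdiff

/-- Convergence of the regularization as `δ → 0⁺`: if for each `δ > 0`, `W δ` is the
(unique) continuously differentiable solution on `[0,T]` of
`W_δ(0) = w₀`, `W_δ'(t) = k_d·(r(t) − ψ_δ(W_δ(t)))`, then there exist a Lipschitz `w` and a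
measurable `z` with `w(0) = w₀`, `z(t) ∈ ψ(w(t))` and `w'(t) = k_d·(r(t) − z(t))` for a.e.
`t ∈ (0,T)`, such that `W δ → w` uniformly on `[0,T]` as `δ → 0⁺`. -/
theorem regularization_convergence (T k kd w₀ : ℝ) (hT : 0 < T) (hk : 0 < k) (hkd : 0 < kd)
    (hw₀ : 0 ≤ w₀) (r : ℝ → ℝ) (hr : ContinuousOn r (Set.Icc 0 T))
    (hrb : ∀ t ∈ Set.Icc (0 : ℝ) T, 0 ≤ r t ∧ r t ≤ k / 4)
    (W : ℝ → ℝ → ℝ)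
    (hWcont : ∀ δ > (0 : ℝ), ContinuousOn (W δ) (Set.Icc 0 T))
    (hW0 : ∀ δ > (0 : ℝ), W δ 0 = w₀)
    (hWderiv : ∀ δ > (0 : ℝ), ∀ t ∈ Set.Icc (0 : ℝ) T,
      HasDerivWithinAt (W δ) (kd * (r t - psiDelta δ (W δ t))) (Set.Icc 0 T) t) :
    ∃ w z : ℝ → ℝ,
      (∃ L : NNReal, LipschitzOnWith L w (Set.Icc 0 T)) ∧
      Measurable z ∧
      w 0 = w₀ ∧
      (∀ᵐ t ∂(volume.restrict (Set.Ioo (0 : ℝ) T)),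
        z t ∈ psiGraph (w t) ∧ HasDerivAt w (kd * (r t - z t)) t) ∧
      TendstoUniformlyOn W w (nhdsWithin 0 (Set.Ioi 0)) (Set.Icc 0 T) :=
  regularization_convergence_general T k kd w₀ hT hkd hw₀ r hr hrb W hW0 hWderiv
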